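/- Let λ be a Borel probability measure on Aut(X,μ), κ > ρ⁺(λ) = ρ, and λ = κλ₁ + (1−κ)λ₂. Then X decomposes into at most (1−ρ)/(κ−ρ) pairwise disjoint λ₁-ergodic measurable sets of positive measure. In particular, λ₁ has at most finitely many ergodic components. -/

import Mathlib

/-!
Testing `ρ⁺(λ)` against the centred indicator `1_Z - μ Z` of a `λ₁`-invariant set `Z` of measure
`m ∈ (0, 1)` gives `ρ (m - m²) ≥ κ m - m²`, i.e. `m ≥ (κ - ρ) / (1 - ρ)`: the correlation
`μ (a⁻¹ Z ∩ Z)` equals `m` for `λ₁`-almost every `a` and is nonnegative for the others.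
Invariant sets are closed under differences, so a partition of `X` into invariant sets of positive
measure with the largest number of parts (there are at most `(1 - ρ) / (κ - ρ)` of them) cannot be
refined, and its parts are ergodic.
-/

open MeasureTheory
open scoped ENNReal

/-- The expected boundary measure `e_λ(Y) = ∫ μ(Ya \ Y) dλ(a)`. -/
noncomputable def expBoundary {X Ω : Type*} [MeasurableSpace X] [MeasurableSpace Ω]
    (μ : Measure X) (P : Measure Ω) (a : Ω → X ≃ᵐ X) (Y : Set X) : ℝ≥0∞ :=
  ∫⁻ ω, μ ((a ω) '' Y \ Y) ∂P

/-- `ρ⁺(λ)`: top of the spectrum of the averaging operator on `L²₀`. -/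
noncomputable def rhoPlus {X Ω : Type*} [MeasurableSpace X] [MeasurableSpace Ω]
    (μ : Measure X) (P : Measure Ω) (a : Ω → X ≃ᵐ X) : ℝ :=
  sSup { r : ℝ | ∃ f : X → ℝ, MemLp f 2 μ ∧ (∫ x, f x ∂μ) = 0 ∧
    (∫ x, f x ^ 2 ∂μ) ≠ 0 ∧
    r = (∫ ω, (∫ x, f ((a ω) x) * f x ∂μ) ∂P) / (∫ x, f x ^ 2 ∂μ) }

/-- `Y` is `λ₁`-invariant: `e_{λ₁}(Y) = 0`. -/
def IsInvariantSet {X Ω : Type*} [MeasurableSpace X] [MeasurableSpace Ω]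
    (μ : Measure X) (P₁ : Measure Ω) (a : Ω → X ≃ᵐ X) (Y : Set X) : Prop :=
  expBoundary μ P₁ a Y = 0

/-- `Y` is `λ₁`-ergodic: it is `λ₁`-invariant and every `λ₁`-invariant measurable
subset of `Y` is null or conull in `Y`. -/
def IsErgodicSet {X Ω : Type*} [MeasurableSpace X] [MeasurableSpace Ω]
    (μ : Measure X) (P₁ : Measure Ω) (a : Ω → X ≃ᵐ X) (Y : Set X) : Prop :=
  IsInvariantSet μ P₁ a Y ∧
    ∀ Z : Set X, Z ⊆ Y → MeasurableSet Z → IsInvariantSet μ P₁ a Z →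
      μ Z = 0 ∨ μ (Y \ Z) = 0

open Set

section InvariantSets

variable {X : Type*} [MeasurableSpace X] {μ : Measure X}

lemma MeasureTheory.MeasurePreserving.measure_image_sdiff_self {e : X ≃ᵐ X}
    (he : MeasurePreserving e μ μ) {Z : Set X} (hZ : MeasurableSet Z) :
    μ (e '' Z \ Z) = μ (Z \ e ⁻¹' Z) := by
  rw [← he.measure_preimage ((e.measurableSet_image.mpr hZ).diff hZ).nullMeasurableSet,
    preimage_sdiff, e.preimage_image]

lemma MeasureTheory.MeasurePreserving.measure_preimage_sdiff_self_eq_zero [IsFiniteMeasure μ]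
    {e : X → X} (he : MeasurePreserving e μ μ) {Z : Set X} (hZ : MeasurableSet Z)
    (h : μ (Z \ e ⁻¹' Z) = 0) : μ (e ⁻¹' Z \ Z) = 0 := by
  rwa [measure_sdiff_symm (he.measurable hZ).nullMeasurableSet hZ.nullMeasurableSet
    (he.measure_preimage hZ.nullMeasurableSet) (measure_ne_top _ _)]

variable {Ω : Type*} [MeasurableSpace Ω] {P : Measure Ω} {a : Ω → X ≃ᵐ X}

lemma measurable_measure_preimage_inter [SFinite μ] (hj : Measurable fun p : Ω × X => a p.1 p.2)
    {A B : Set X} (hA : MeasurableSet A) (hB : MeasurableSet B) :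
    Measurable fun ω => μ (a ω ⁻¹' A ∩ B) :=
  measurable_measure_prodMk_left ((hj hA).inter (measurable_snd hB))

lemma isInvariantSet_iff_ae [SFinite μ] (ha : ∀ ω, MeasurePreserving (a ω) μ μ)
    (hj : Measurable fun p : Ω × X => a p.1 p.2) {Z : Set X} (hZ : MeasurableSet Z) :
    IsInvariantSet μ P a Z ↔ ∀ᵐ ω ∂P, μ (Z \ a ω ⁻¹' Z) = 0 := by
  have hmeas : Measurable fun ω => μ (Z \ a ω ⁻¹' Z) := by
    simpa only [sdiff_eq, inter_comm Z, ← preimage_compl] using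
      measurable_measure_preimage_inter hj hZ.compl hZ
  simp only [IsInvariantSet, expBoundary, (ha _).measure_image_sdiff_self hZ]
  exact lintegral_eq_zero_iff hmeas

lemma IsInvariantSet.diff [IsFiniteMeasure μ] (ha : ∀ ω, MeasurePreserving (a ω) μ μ)
    (hj : Measurable fun p : Ω × X => a p.1 p.2) {Y Z : Set X}
    (hY : MeasurableSet Y) (hZ : MeasurableSet Z)
    (hYi : IsInvariantSet μ P a Y) (hZi : IsInvariantSet μ P a Z) :
    IsInvariantSet μ P a (Y \ Z) := by
  rw [isInvariantSet_iff_ae ha hj hY] at hYi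
  rw [isInvariantSet_iff_ae ha hj hZ] at hZi
  rw [isInvariantSet_iff_ae ha hj (hY.diff hZ)]
  filter_upwards [hYi, hZi] with ω hYω hZω
  have hZω' := (ha ω).measure_preimage_sdiff_self_eq_zero hZ hZω
  refine measure_mono_null (fun x hx => ?_) (measure_union_null hYω hZω')
  simp only [mem_union, mem_sdiff, mem_preimage] at hx ⊢
  tauto

end InvariantSets

section Rayleigh

variable {X : Type*} [MeasurableSpace X] {μ : Measure X}

lemma abs_integral_comp_mul_le {e : X ≃ᵐ X} (he : MeasurePreserving e μ μ) {f : X → ℝ}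
    (hf : MemLp f 2 μ) : |∫ x, f (e x) * f x ∂μ| ≤ ∫ x, f x ^ 2 ∂μ := by
  have hsq : Integrable (fun x => f x ^ 2) μ := hf.integrable_sq
  have hsq_comp : Integrable (fun x => f (e x) ^ 2) μ :=
    (hf.comp_measurePreserving he).integrable_sq
  calc |∫ x, f (e x) * f x ∂μ|
      ≤ ∫ x, (f (e x) ^ 2 + f x ^ 2) / 2 ∂μ := by
        refine norm_integral_le_of_norm_le (f := fun x => f (e x) * f x)
          ((hsq_comp.add hsq).div_const 2)
          (ae_of_all _ fun x => ?_)
        rw [Real.norm_eq_abs, abs_mul]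
        nlinarith [sq_nonneg (|f (e x)| - |f x|), sq_abs (f (e x)), sq_abs (f x)]
    _ = ∫ x, f x ^ 2 ∂μ := by
        rw [integral_div (2 : ℝ) (fun x => f (e x) ^ 2 + f x ^ 2), integral_add hsq_comp hsq,
          he.integral_comp' (g := fun y => f y ^ 2)]
        ring

variable {Ω : Type*} [MeasurableSpace Ω] {P : Measure Ω} {a : Ω → X ≃ᵐ X}

lemma div_le_rhoPlus [IsFiniteMeasure P] (ha : ∀ ω, MeasurePreserving (a ω) μ μ) {f : X → ℝ}
    (hf : MemLp f 2 μ) (hf_mean : ∫ x, f x ∂μ = 0) (hf_sq : ∫ x, f x ^ 2 ∂μ ≠ 0) :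
    (∫ ω, (∫ x, f (a ω x) * f x ∂μ) ∂P) / (∫ x, f x ^ 2 ∂μ) ≤ rhoPlus μ P a := by
  refine le_csSup ⟨P.real univ, ?_⟩ ⟨f, hf, hf_mean, hf_sq, rfl⟩
  rintro _ ⟨g, hg, -, hg_sq, rfl⟩
  have hpos : 0 < ∫ x, g x ^ 2 ∂μ :=
    (integral_nonneg fun x => sq_nonneg (g x)).lt_of_ne' hg_sq
  rw [div_le_iff₀ hpos, mul_comm]
  exact (le_abs_self _).trans (norm_integral_le_of_norm_le_const (μ := P)
    (f := fun ω => ∫ x, g (a ω x) * g x ∂μ)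
    (ae_of_all _ fun ω => abs_integral_comp_mul_le (ha ω) hg))

end Rayleigh

section Indicator

open ProbabilityTheory

variable {X : Type*} [MeasurableSpace X] {μ : Measure X} [IsProbabilityMeasure μ]

lemma memLp_indicator_one {A : Set X} (hA : MeasurableSet A) (p : ℝ≥0∞) :
    MemLp (A.indicator (1 : X → ℝ)) p μ :=
  memLp_indicator_const p hA 1 (Or.inr (measure_ne_top μ A))

lemma integral_indicator_one_sub_measureReal {A : Set X} (hA : MeasurableSet A) :
    ∫ x, (A.indicator 1 x - μ.real A) ∂μ = 0 := by
  rw [integral_sub ((memLp_indicator_one hA 1).integrable le_rfl) (integrable_const _),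
    integral_indicator_one hA]
  simp

lemma integral_indicator_one_sub_mul_indicator_one_sub {A B : Set X} (hA : MeasurableSet A)
    (hB : MeasurableSet B) :
    ∫ x, (A.indicator 1 x - μ.real A) * (B.indicator 1 x - μ.real B) ∂μ
      = μ.real (A ∩ B) - μ.real A * μ.real B := by
  have hcov := covariance_eq_sub (memLp_indicator_one hA 2 (μ := μ)) (memLp_indicator_one hB 2)
  rw [← inter_indicator_one, integral_indicator_one (hA.inter hB), integral_indicator_one hA,
    integral_indicator_one hB] at hcov
  rw [← hcov, covariance, integral_indicator_one hA, integral_indicator_one hB]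

end Indicator

section Mixture

variable {Ω : Type*} [MeasurableSpace Ω]

lemma mem_Icc_of_ofReal_add_ofReal_one_sub_eq_one {κ : ℝ}
    (h : ENNReal.ofReal κ + ENNReal.ofReal (1 - κ) = 1) : κ ∈ Icc 0 1 := by
  constructor <;> by_contra! hκ
  · rw [ENNReal.ofReal_of_nonpos hκ.le, zero_add, ENNReal.ofReal_eq_one] at h
    linarith
  · rw [ENNReal.ofReal_of_nonpos (show 1 - κ ≤ 0 by linarith), add_zero,
      ENNReal.ofReal_eq_one] at h
    linarith

lemma integral_mixture {κ : ℝ} (hκ : κ ∈ Icc 0 1) {P₁ P₂ : Measure Ω} {g : Ω → ℝ}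
    (h₁ : Integrable g P₁) (h₂ : Integrable g P₂) :
    ∫ ω, g ω ∂(ENNReal.ofReal κ • P₁ + ENNReal.ofReal (1 - κ) • P₂)
      = κ * ∫ ω, g ω ∂P₁ + (1 - κ) * ∫ ω, g ω ∂P₂ := by
  rw [integral_add_measure (h₁.smul_measure ENNReal.ofReal_ne_top)
      (h₂.smul_measure ENNReal.ofReal_ne_top), integral_smul_measure, integral_smul_measure,
    ENNReal.toReal_ofReal hκ.1, ENNReal.toReal_ofReal (sub_nonneg.mpr hκ.2), smul_eq_mul,
    smul_eq_mul]

end Mixture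

section InvariantSetMeasure

variable {X Ω : Type*} [MeasurableSpace X] [MeasurableSpace Ω] {μ : Measure X}
  {P P₁ P₂ : Measure Ω} {a : Ω → X ≃ᵐ X}

lemma mem_Icc_of_eq_mixture [IsProbabilityMeasure P] [IsProbabilityMeasure P₁]
    [IsProbabilityMeasure P₂] {κ : ℝ}
    (hdec : P = ENNReal.ofReal κ • P₁ + ENNReal.ofReal (1 - κ) • P₂) : κ ∈ Icc 0 1 := by
  apply mem_Icc_of_ofReal_add_ofReal_one_sub_eq_one
  simpa [hdec] using measure_univ (μ := P)

lemma div_le_measureReal_of_isInvariantSet [IsProbabilityMeasure μ] [IsProbabilityMeasure P]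
    [IsProbabilityMeasure P₁] [IsProbabilityMeasure P₂] (ha : ∀ ω, MeasurePreserving (a ω) μ μ)
    (hj : Measurable fun p : Ω × X => a p.1 p.2) {κ : ℝ} (hρ : rhoPlus μ P a < κ)
    (hdec : P = ENNReal.ofReal κ • P₁ + ENNReal.ofReal (1 - κ) • P₂) {Z : Set X}
    (hZ : MeasurableSet Z) (hZi : IsInvariantSet μ P₁ a Z) (hZ0 : μ Z ≠ 0) :
    (κ - rhoPlus μ P a) / (1 - rhoPlus μ P a) ≤ μ.real Z := by
  set ρ := rhoPlus μ P a
  set m := μ.real Z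
  have hκ := mem_Icc_of_eq_mixture hdec
  have hm0 : 0 < m := ENNReal.toReal_pos hZ0 (measure_ne_top μ Z)
  rcases (measureReal_le_one (μ := μ) (s := Z)).eq_or_lt with hm1 | hm1
  · rw [show m = 1 from hm1, div_le_one (by linarith [hκ.2])]
    linarith [hκ.2]
  set f : X → ℝ := fun x => Z.indicator 1 x - m
  have hf_sq : ∫ x, f x ^ 2 ∂μ = m - m ^ 2 := by
    have := integral_indicator_one_sub_mul_indicator_one_sub (μ := μ) hZ hZ
    rw [inter_self] at this
    simp only [f, sq]
    exact this
  set H : Ω → ℝ := fun ω => μ.real (a ω ⁻¹' Z ∩ Z)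
  have hcorr : ∀ ω, ∫ x, f (a ω x) * f x ∂μ = H ω - m ^ 2 := fun ω => by
    have hpre : μ.real (a ω ⁻¹' Z) = m := (ha ω).measureReal_preimage hZ.nullMeasurableSet
    have := integral_indicator_one_sub_mul_indicator_one_sub (μ := μ) ((a ω).measurable hZ) hZ
    rw [hpre] at this
    simp only [f, H, sq]
    exact this
  have hH_int : ∀ (Q : Measure Ω) [IsFiniteMeasure Q], Integrable H Q := fun Q _ =>
    Integrable.of_bound
      ((measurable_measure_preimage_inter hj hZ hZ).ennreal_toReal.aestronglyMeasurable) 1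
      (ae_of_all _ fun ω => by
        rw [Real.norm_eq_abs, abs_of_nonneg measureReal_nonneg]
        exact measureReal_le_one)
  have hH₁ : ∫ ω, H ω ∂P₁ = m := by
    suffices H =ᵐ[P₁] fun _ => m by simp [integral_congr_ae this]
    filter_upwards [(isInvariantSet_iff_ae ha hj hZ).mp hZi] with ω hω
    have := measure_inter_add_sdiff (μ := μ) Z ((a ω).measurable hZ)
    rw [hω, add_zero, inter_comm] at this
    simp only [H, m, measureReal_def, this]
  have hH : κ * m ≤ ∫ ω, H ω ∂P := by
    rw [hdec, integral_mixture hκ (hH_int P₁) (hH_int P₂), hH₁]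
    exact le_add_of_nonneg_right (mul_nonneg (sub_nonneg.mpr hκ.2)
      (integral_nonneg fun ω => measureReal_nonneg))
  have hvar : 0 < m - m ^ 2 := by nlinarith
  have hrayleigh := div_le_rhoPlus (P := P) (f := f) ha
    ((memLp_indicator_one hZ 2).sub (memLp_const m)) (integral_indicator_one_sub_measureReal hZ)
    (hf_sq ▸ hvar.ne')
  simp only [hcorr, hf_sq] at hrayleigh
  rw [integral_sub (hH_int P) (integrable_const _), integral_const, probReal_univ, one_smul,
    div_le_iff₀ hvar] at hrayleigh
  have hκm : κ - m ≤ ρ * (1 - m) := le_of_mul_le_mul_left (by linarith) hm0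
  rw [div_le_iff₀ (by linarith [hκ.2])]
  linarith

end InvariantSetMeasure

section AtomicPartition

open Finset

variable {X : Type*} [MeasurableSpace X] {μ : Measure X} {S : Set X → Prop}

structure IsPositivePartition (μ : Measure X) (S : Set X → Prop) (𝓟 : Finset (Set X)) : Prop where
  mem : ∀ Y ∈ 𝓟, S Y ∧ μ Y ≠ 0
  pairwiseDisjoint : (𝓟 : Set (Set X)).PairwiseDisjoint id
  sUnion_eq : ⋃₀ (𝓟 : Set (Set X)) = univ

namespace IsPositivePartition

variable {𝓟 : Finset (Set X)}

lemma card_pos [NeZero μ] (h𝓟 : IsPositivePartition μ S 𝓟) : 0 < #𝓟 := by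
  rw [Finset.card_pos, Finset.nonempty_iff_ne_empty]
  rintro rfl
  have hμ : μ univ = 0 := by simp [← h𝓟.sUnion_eq]
  exact NeZero.ne μ (Measure.measure_univ_eq_zero.mp hμ)

lemma card_mul_le [IsFiniteMeasure μ] {c : ℝ} (hmeas : ∀ Y, S Y → MeasurableSet Y)
    (hge : ∀ Y, S Y → μ Y ≠ 0 → c ≤ μ.real Y) (h𝓟 : IsPositivePartition μ S 𝓟) :
    #𝓟 * c ≤ μ.real univ := by
  calc #𝓟 * c = ∑ _ ∈ 𝓟, c := by rw [sum_const, nsmul_eq_mul]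
    _ ≤ ∑ Y ∈ 𝓟, μ.real Y := sum_le_sum fun Y hY => hge Y (h𝓟.mem Y hY).1 (h𝓟.mem Y hY).2
    _ = μ.real (⋃ Y ∈ 𝓟, Y) :=
      (measureReal_biUnion_finset h𝓟.pairwiseDisjoint fun Y hY => hmeas Y (h𝓟.mem Y hY).1).symm
    _ = μ.real univ := by rw [← h𝓟.sUnion_eq, sUnion_eq_biUnion, set_biUnion_coe]

lemma exists_card_eq_add_one [DecidableEq (Set X)] (h𝓟 : IsPositivePartition μ S 𝓟)
    {Y Z : Set X} (hY : Y ∈ 𝓟) (hZY : Z ⊆ Y) (hZ : S Z) (hYZ : S (Y \ Z)) (hZ0 : μ Z ≠ 0)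
    (hYZ0 : μ (Y \ Z) ≠ 0) :
    ∃ 𝓠, IsPositivePartition μ S 𝓠 ∧ #𝓠 = #𝓟 + 1 := by
  have hdisjY : ∀ W ∈ 𝓟.erase Y, Disjoint W Y := fun W hW =>
    h𝓟.pairwiseDisjoint (mem_erase.mp hW).2 hY (mem_erase.mp hW).1
  have hnotMem : ∀ V ⊆ Y, μ V ≠ 0 → V ∉ 𝓟.erase Y := fun V hVY hV0 hV => by
    simp [(hdisjY V hV).eq_bot_of_le hVY] at hV0
  have hZ_ne : Z ≠ Y \ Z := fun h => by
    simp [disjoint_sdiff_self_right.eq_bot_of_le h.le] at hZ0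
  refine ⟨insert Z (insert (Y \ Z) (𝓟.erase Y)), ⟨?_, ?_, ?_⟩, ?_⟩
  · simp only [Finset.mem_insert]
    rintro W (rfl | rfl | hW)
    exacts [⟨hZ, hZ0⟩, ⟨hYZ, hYZ0⟩, h𝓟.mem W (mem_of_mem_erase hW)]
  · rw [coe_insert, coe_insert]
    refine ((h𝓟.pairwiseDisjoint.subset (coe_subset.mpr (erase_subset _ _))).insert
      fun W hW _ => ((hdisjY W hW).mono_right Set.sdiff_subset).symm).insert ?_
    rintro W (rfl | hW) _
    exacts [disjoint_sdiff_self_right, (hdisjY W hW).symm.mono_left hZY]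
  · rw [coe_insert, coe_insert, sUnion_insert, sUnion_insert, ← Set.union_assoc,
      union_sdiff_cancel hZY, coe_erase, ← sUnion_insert, insert_sdiff_singleton,
      Set.insert_eq_of_mem (mem_coe.mpr hY), h𝓟.sUnion_eq]
  · rw [card_insert_of_notMem, card_insert_of_notMem (hnotMem _ Set.sdiff_subset hYZ0),
      card_erase_add_one hY]
    simpa [hZ_ne] using hnotMem Z hZY hZ0

end IsPositivePartition

lemma exists_isPositivePartition_of_le_measureReal [IsFiniteMeasure μ] [NeZero μ] {c : ℝ}
    (hc : 0 < c) (hmeas : ∀ Y, S Y → MeasurableSet Y) (huniv : S univ)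
    (hdiff : ∀ Y Z, S Y → S Z → Z ⊆ Y → S (Y \ Z)) (hge : ∀ Y, S Y → μ Y ≠ 0 → c ≤ μ.real Y) :
    ∃ 𝓟, IsPositivePartition μ S 𝓟 ∧ ∀ Y ∈ 𝓟, ∀ Z ⊆ Y, S Z → μ Z = 0 ∨ μ (Y \ Z) = 0 := by
  classical
  set K : Set ℕ := {k | ∃ 𝓟, IsPositivePartition μ S 𝓟 ∧ #𝓟 = k}
  have hK_bdd : BddAbove K := by
    refine ⟨⌈μ.real univ / c⌉₊, ?_⟩
    rintro _ ⟨𝓟, h𝓟, rfl⟩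
    exact Nat.cast_le.mp
      (((le_div_iff₀ hc).mpr (h𝓟.card_mul_le hmeas hge)).trans (Nat.le_ceil _))
  have hK_ne : K.Nonempty :=
    ⟨1, {univ}, ⟨by simpa using ⟨huniv, NeZero.ne μ⟩, by simp, by simp⟩, rfl⟩
  obtain ⟨𝓟, h𝓟, hcard⟩ := Nat.sSup_mem hK_ne hK_bdd
  refine ⟨𝓟, h𝓟, fun Y hY Z hZY hZ => ?_⟩
  by_contra! h
  obtain ⟨𝓠, h𝓠, hcard'⟩ := h𝓟.exists_card_eq_add_one hY hZY hZ
    (hdiff Y Z (h𝓟.mem Y hY).1 hZ hZY) h.1 h.2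
  have := le_csSup hK_bdd ⟨𝓠, h𝓠, rfl⟩
  omega

end AtomicPartition

open Finset in
lemma exists_fin_enumeration_of_pairwiseDisjoint {X : Type*} (𝓟 : Finset (Set X))
    (h𝓟 : (𝓟 : Set (Set X)).PairwiseDisjoint id) :
    ∃ Xs : Fin #𝓟 → Set X, (∀ i, Xs i ∈ 𝓟) ∧ Pairwise (Function.onFun Disjoint Xs) ∧
      ⋃ i, Xs i = ⋃₀ (𝓟 : Set (Set X)) := by
  refine ⟨fun i => 𝓟.equivFin.symm i, fun i => (𝓟.equivFin.symm i).2, fun i j hij => ?_, ?_⟩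
  · exact h𝓟 (𝓟.equivFin.symm i).2 (𝓟.equivFin.symm j).2
      (Subtype.coe_injective.ne (𝓟.equivFin.symm.injective.ne hij))
  · rw [sUnion_eq_iUnion]
    exact 𝓟.equivFin.symm.surjective.iUnion_comp (fun Y : 𝓟 => (Y : Set X))

theorem ergodic_decomposition_general {X Ω : Type*} [MeasurableSpace X]
    [MeasurableSpace Ω] (μ : Measure X) (P P₁ P₂ : Measure Ω) (a : Ω → X ≃ᵐ X)
    [IsProbabilityMeasure μ] [IsProbabilityMeasure P]
    [IsProbabilityMeasure P₁] [IsProbabilityMeasure P₂]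
    (ha : ∀ ω, MeasurePreserving (a ω) μ μ)
    (hj : Measurable fun p : Ω × X => (a p.1) p.2)
    (κ : ℝ)
    (hρ : rhoPlus μ P a < κ)
    (hdec : P = ENNReal.ofReal κ • P₁ + ENNReal.ofReal (1 - κ) • P₂) :
    ∃ n : ℕ, 0 < n ∧
      (n : ℝ) ≤ (1 - rhoPlus μ P a) / (κ - rhoPlus μ P a) ∧
      ∃ Xs : Fin n → Set X,
        (∀ i, MeasurableSet (Xs i)) ∧
        (∀ i, 0 < μ (Xs i)) ∧
        (∀ i, IsErgodicSet μ P₁ a (Xs i)) ∧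
        Pairwise (Function.onFun Disjoint Xs) ∧
        (⋃ i, Xs i) = Set.univ := by
  set ρ := rhoPlus μ P a
  have h1ρ : 0 < 1 - ρ := by linarith [(mem_Icc_of_eq_mixture hdec).2]
  have hκρ : 0 < κ - ρ := by linarith
  let S : Set X → Prop := fun Y => MeasurableSet Y ∧ IsInvariantSet μ P₁ a Y
  have hge : ∀ Y, S Y → μ Y ≠ 0 → (κ - ρ) / (1 - ρ) ≤ μ.real Y := fun Y hY hY0 =>
    div_le_measureReal_of_isInvariantSet ha hj hρ hdec hY.1 hY.2 hY0
  obtain ⟨𝓟, h𝓟, hatom⟩ := exists_isPositivePartition_of_le_measureReal (div_pos hκρ h1ρ)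
    (fun _ hY => hY.1) ⟨MeasurableSet.univ, by simp [IsInvariantSet, expBoundary]⟩
    (fun Y Z hY hZ _ => ⟨hY.1.diff hZ.1, hY.2.diff ha hj hY.1 hZ.1 hZ.2⟩) hge
  have hcard := h𝓟.card_mul_le (fun _ hY => hY.1) hge
  rw [probReal_univ, mul_div_assoc', div_le_one h1ρ] at hcard
  obtain ⟨Xs, hmem, hdisj, hunion⟩ :=
    exists_fin_enumeration_of_pairwiseDisjoint 𝓟 h𝓟.pairwiseDisjoint
  refine ⟨𝓟.card, h𝓟.card_pos, (le_div_iff₀ hκρ).mpr hcard, Xs,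
    fun i => (h𝓟.mem _ (hmem i)).1.1, fun i => pos_iff_ne_zero.mpr (h𝓟.mem _ (hmem i)).2,
    fun i => ⟨(h𝓟.mem _ (hmem i)).1.2, fun Z hZY hZ hZi => hatom _ (hmem i) Z hZY ⟨hZ, hZi⟩⟩,
    hdisj, hunion.trans h𝓟.sUnion_eq⟩

theorem ergodic_decomposition {X Ω : Type*} [MeasurableSpace X]
    [MeasurableSpace Ω] (μ : Measure X) (P P₁ P₂ : Measure Ω) (a : Ω → X ≃ᵐ X)
    [IsProbabilityMeasure μ] [IsProbabilityMeasure P]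
    [IsProbabilityMeasure P₁] [IsProbabilityMeasure P₂]
    (ha : ∀ ω, MeasurePreserving (a ω) μ μ)
    (hj : Measurable fun p : Ω × X => (a p.1) p.2)
    (κ : ℝ) (hκ1 : κ ≤ 1)
    (hρ : rhoPlus μ P a < κ)
    (hdec : P = ENNReal.ofReal κ • P₁ + ENNReal.ofReal (1 - κ) • P₂) :
    ∃ n : ℕ, 0 < n ∧
      (n : ℝ) ≤ (1 - rhoPlus μ P a) / (κ - rhoPlus μ P a) ∧
      ∃ Xs : Fin n → Set X,
        (∀ i, MeasurableSet (Xs i)) ∧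
        (∀ i, 0 < μ (Xs i)) ∧
        (∀ i, IsErgodicSet μ P₁ a (Xs i)) ∧
        Pairwise (Function.onFun Disjoint Xs) ∧
        (⋃ i, Xs i) = Set.univ :=
  ergodic_decomposition_general μ P P₁ P₂ a ha hj κ hρ hdec
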